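/- (Unbiasedness of the OME-EIB estimator.) Under the OME recommendation setup, suppose the estimated error rates are accurate, i.e. ρ̂01 = ρ01 and ρ̂10 = ρ10, and the imputed errors are accurate, i.e. ē_{u,i} = ℓ_{u,i}(r*_{u,i}) for every (u,i) ∈ D. Then the OME-EIB estimator is unbiased for the true prediction inaccuracy: E[ε_OME-EIB] = P*. -/

import Mathlib

open Finset

/-- Expectation of a functional `g` of jointly independent families of Bernoulli random
variables `o d ~ Bernoulli (p d)` (observation indicators) and `r d ~ Bernoulli (q d)`
(observed ratings), encoded as a weighted sum over all realizations. -/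
noncomputable def expectOR {D : Type*} [Fintype D] [DecidableEq D] (p q : D → ℝ)
    (g : (D → Bool) → (D → Bool) → ℝ) : ℝ :=
  ∑ o : D → Bool, ∑ r : D → Bool,
    ((∏ d, (if o d then p d else 1 - p d)) * (∏ d, (if r d then q d else 1 - q d))) * g o r

/-! The estimator is a sum of terms each depending on a single pair `(o d, r d)`,
so by linearity its expectation only involves the Bernoulli marginals of that pair. When the
error rates are known, the surrogate error is an unbiased estimate of the true loss under the
rating noise; an observed pair then contributes `ℓ(r*)` in expectation and an unobserved one
contributes the imputed error, which is `ℓ(r*)` as well, whatever the propensity. -/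

section ProductWeights

variable {ι α R : Type*} [Fintype ι] [DecidableEq ι] [Fintype α] [CommSemiring R]
  {w : ι → α → R}

theorem sum_prod_weight_mul_apply (hw : ∀ i, ∑ a, w i a = 1) (i₀ : ι) (g : α → R) :
    ∑ f : ι → α, (∏ i, w i (f i)) * g (f i₀) = ∑ a, w i₀ a * g a := by
  -- put `g` into the `i₀`-th factor; after expanding, every other factor sums to `1`
  have absorb : ∀ f : ι → α, (∏ i, w i (f i)) * g (f i₀)
      = ∏ i, w i (f i) * (if i = i₀ then g (f i) else 1) := by
    intro f
    rw [prod_mul_distrib, Fintype.prod_ite_eq']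
  simp_rw [absorb]
  rw [← Fintype.prod_sum fun i a => w i a * if i = i₀ then g a else 1]
  refine (Fintype.prod_eq_single i₀ fun i hi => ?_).trans (by simp)
  simp [hi, hw i]

theorem sum_prod_weight_mul_sum_apply (hw : ∀ i, ∑ a, w i a = 1) (h : ι → α → R) :
    ∑ f : ι → α, (∏ i, w i (f i)) * ∑ i, h i (f i) = ∑ i, ∑ a, w i a * h i a := by
  simp_rw [mul_sum]
  rw [sum_comm]
  exact sum_congr rfl fun i _ => sum_prod_weight_mul_apply hw i (h i)

end ProductWeights

def bernoulliWeight (p : ℝ) (b : Bool) : ℝ := if b then p else 1 - p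

theorem sum_bernoulliWeight (p : ℝ) : ∑ b, bernoulliWeight p b = 1 := by
  simp [bernoulliWeight]

section ExpectOR

variable {D : Type*} [Fintype D] [DecidableEq D]

theorem expectOR_const_mul (p q : D → ℝ) (c : ℝ) (g : (D → Bool) → (D → Bool) → ℝ) :
    expectOR p q (fun o r => c * g o r) = c * expectOR p q g := by
  simp only [expectOR, mul_sum]
  exact sum_congr rfl fun o _ => sum_congr rfl fun r _ => by ring

theorem expectOR_sum_apply (p q : D → ℝ) (H : D → Bool → Bool → ℝ) :
    expectOR p q (fun o r => ∑ d, H d (o d) (r d))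
      = ∑ d, ∑ a, bernoulliWeight (p d) a * ∑ b, bernoulliWeight (q d) b * H d a b := by
  have inner : ∀ o : D → Bool,
      ∑ r : D → Bool, (∏ d, bernoulliWeight (q d) (r d)) * ∑ d, H d (o d) (r d)
        = ∑ d, ∑ b, bernoulliWeight (q d) b * H d (o d) b := fun o =>
    sum_prod_weight_mul_sum_apply (fun d => sum_bernoulliWeight (q d)) fun d => H d (o d)
  calc expectOR p q (fun o r => ∑ d, H d (o d) (r d))
      = ∑ o : D → Bool, (∏ d, bernoulliWeight (p d) (o d)) *
          ∑ r : D → Bool, (∏ d, bernoulliWeight (q d) (r d)) * ∑ d, H d (o d) (r d) := by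
        refine sum_congr rfl fun o _ => ?_
        rw [mul_sum]
        refine sum_congr rfl fun r _ => ?_
        simp only [bernoulliWeight]
        ring
    _ = ∑ o : D → Bool, (∏ d, bernoulliWeight (p d) (o d)) *
          ∑ d, ∑ b, bernoulliWeight (q d) b * H d (o d) b := by
        simp only [inner]
    _ = _ := sum_prod_weight_mul_sum_apply (fun d => sum_bernoulliWeight (p d))
          fun d a => ∑ b, bernoulliWeight (q d) b * H d a b

end ExpectOR

noncomputable def surrogateLoss (ρ01 ρ10 : ℝ) (loss : Bool → ℝ) (b : Bool) : ℝ :=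
  if b then ((1 - ρ10) * loss true - ρ01 * loss false) / (1 - ρ01 - ρ10)
  else ((1 - ρ01) * loss false - ρ10 * loss true) / (1 - ρ01 - ρ10)

theorem sum_bernoulliWeight_mul_surrogateLoss {ρ01 ρ10 : ℝ} (hρ : ρ01 + ρ10 ≠ 1)
    (loss : Bool → ℝ) (rstar : Bool) :
    ∑ b, bernoulliWeight (if rstar then 1 - ρ01 else ρ10) b * surrogateLoss ρ01 ρ10 loss b
      = loss rstar := by
  have hden : 1 - ρ01 - ρ10 ≠ 0 := fun h => hρ (by linarith)
  cases rstar <;>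
  · simp only [Fintype.sum_bool, bernoulliWeight, surrogateLoss, if_true, if_false,
      Bool.false_eq_true]
    field_simp
    ring

def eibError (ebar : ℝ) (surrogate : Bool → ℝ) (o r : Bool) : ℝ :=
  (1 - (if o then (1 : ℝ) else 0)) * ebar + (if o then (1 : ℝ) else 0) * surrogate r

theorem sum_bernoulliWeight_mul_eibError {ebar p q : ℝ} {surrogate : Bool → ℝ}
    (h : ∑ b, bernoulliWeight q b * surrogate b = ebar) :
    ∑ a, bernoulliWeight p a * ∑ b, bernoulliWeight q b * eibError ebar surrogate a b
      = ebar := by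
  simp only [Fintype.sum_bool, bernoulliWeight, eibError, if_true, if_false,
    Bool.false_eq_true] at h ⊢
  linear_combination p * h

theorem unbiasedness_OME_EIB_general {D : Type*} [Fintype D] [DecidableEq D]
    (rstar : D → Bool) (l : D → Bool → ℝ) (p ebar : D → ℝ)
    (ρ01 ρ10 ρh01 ρh10 : ℝ)
    (hhsum : ρh01 + ρh10 < 1)
    (hacc01 : ρh01 = ρ01) (hacc10 : ρh10 = ρ10)
    (hacce : ∀ d, ebar d = l d (rstar d)) :
    expectOR p (fun d => if rstar d then 1 - ρ01 else ρ10)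
        (fun o r => (1 / (Fintype.card D : ℝ)) * ∑ d,
          ((1 - (if o d then (1 : ℝ) else 0)) * ebar d +
            (if o d then (1 : ℝ) else 0) *
              (if r d then ((1 - ρh10) * l d true - ρh01 * l d false) / (1 - ρh01 - ρh10)
               else ((1 - ρh01) * l d false - ρh10 * l d true) / (1 - ρh01 - ρh10)))) =
      (1 / (Fintype.card D : ℝ)) * ∑ d, l d (rstar d) := by
  subst hacc01 hacc10
  rw [expectOR_const_mul]
  refine congrArg _ ((expectOR_sum_apply p _ fun d =>
    eibError (ebar d) (surrogateLoss ρh01 ρh10 (l d))).trans (sum_congr rfl fun d _ => ?_))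
  have hsurrogate := sum_bernoulliWeight_mul_surrogateLoss hhsum.ne (l d) (rstar d)
  rw [← hacce d] at hsurrogate ⊢
  exact sum_bernoulliWeight_mul_eibError hsurrogate

/-- **Unbiasedness of the OME-EIB estimator.** Under the OME
recommendation setup, if the estimated error rates are accurate (`ρh01 = ρ01`,
`ρh10 = ρ10`) and the imputed errors are accurate (`ebar d = ℓ_d(r*_d)` for all `d`),
then the OME-EIB estimator is unbiased: `E[ε_OME-EIB] = P*`. -/
theorem unbiasedness_OME_EIB {D : Type*} [Fintype D] [DecidableEq D] [Nonempty D]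
    (rstar : D → Bool) (l : D → Bool → ℝ) (p ebar : D → ℝ)
    (ρ01 ρ10 ρh01 ρh10 : ℝ)
    (hp0 : ∀ d, 0 < p d) (hp1 : ∀ d, p d ≤ 1)
    (h01 : 0 ≤ ρ01) (h10 : 0 ≤ ρ10) (hsum : ρ01 + ρ10 < 1)
    (hh01 : 0 ≤ ρh01) (hh10 : 0 ≤ ρh10) (hhsum : ρh01 + ρh10 < 1)
    (hacc01 : ρh01 = ρ01) (hacc10 : ρh10 = ρ10)
    (hacce : ∀ d, ebar d = l d (rstar d)) :
    expectOR p (fun d => if rstar d then 1 - ρ01 else ρ10)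
        (fun o r => (1 / (Fintype.card D : ℝ)) * ∑ d,
          ((1 - (if o d then (1 : ℝ) else 0)) * ebar d +
            (if o d then (1 : ℝ) else 0) *
              (if r d then ((1 - ρh10) * l d true - ρh01 * l d false) / (1 - ρh01 - ρh10)
               else ((1 - ρh01) * l d false - ρh10 * l d true) / (1 - ρh01 - ρh10)))) =
      (1 / (Fintype.card D : ℝ)) * ∑ d, l d (rstar d) :=
  unbiasedness_OME_EIB_general rstar l p ebar ρ01 ρ10 ρh01 ρh10 hhsum hacc01 hacc10 hacce
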